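/- Minimizing KL(P, P_J) over junction tree distributions is equivalent to maximizing the junction tree weight: KL(P, P_J) = I(X) − [Σ_{C∈𝒞} I(X_C) − Σ_{S∈𝒮} (ν_S − 1) I(X_S)], where the first term I(X) does not depend on the junction tree structure. -/

import Mathlib

open Real Finset

/-- Shannon entropy of a (probability mass) function on a finite type. -/
noncomputable def entH {α : Type*} [Fintype α] (q : α → ℝ) : ℝ :=
  ∑ x, Real.negMulLog (q x)

/-- Marginal of `p` on the coordinate set `A`. -/
noncomputable def marg {V Λ : Type*} [Fintype V] [DecidableEq V] [Fintype Λ] [DecidableEq Λ]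
    (p : (V → Λ) → ℝ) (A : Finset V) : (A → Λ) → ℝ :=
  fun y => ∑ x : V → Λ, if ∀ i : A, x i.1 = y i then p x else 0

/-- Marginal probability of the `A`-part of the full realization `x`. -/
noncomputable def margAt {V Λ : Type*} [Fintype V] [DecidableEq V] [Fintype Λ] [DecidableEq Λ]
    (p : (V → Λ) → ℝ) (A : Finset V) (x : V → Λ) : ℝ :=
  marg p A (fun i => x i.1)

/-- Information content `I(X_A) = ∑_{i∈A} H(X_i) − H(X_A)`
(this formula automatically gives `0` when `|A| < 2`). -/
noncomputable def info {V Λ : Type*} [Fintype V] [DecidableEq V] [Fintype Λ] [DecidableEq Λ]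
    (p : (V → Λ) → ℝ) (A : Finset V) : ℝ :=
  (∑ i ∈ A, entH (marg p {i})) - entH (marg p A)

/-- Kullback–Leibler divergence. -/
noncomputable def KL {α : Type*} [Fintype α] (q r : α → ℝ) : ℝ :=
  ∑ x, q x * Real.log (q x / r x)

/-- The separator associated with an edge of the junction tree: the intersection of
the two clusters joined by the edge. -/
noncomputable def sep {V m : Type*} [DecidableEq V] (C : m → Finset V) :
    Sym2 m → Finset V :=
  Sym2.lift ⟨fun k l => C k ∩ C l, fun k l => Finset.inter_comm _ _⟩

/-! The log-ratio `log (P / P_J)` splits into `log P − ∑_C log P(x_C) + ∑_S log P(x_S)`, and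
taking `P`-expectations turns each term into an entropy, so
`KL(P, P_J) = −H(X) + ∑_C H(X_C) − ∑_S H(X_S)`. Writing every `H(X_A)` as
`∑_{i∈A} H(X_i) − I(X_A)`, the singleton entropies cancel because, by the running intersection
property, the clusters containing a vertex `i` span a subtree of the junction tree: there is
exactly one more such cluster than there are tree edges whose separator contains `i`. -/

lemma SimpleGraph.IsAcyclic.card_filter_edgeFinset_subset_add_one {V : Type*} [Fintype V]
    [DecidableEq V] {G : SimpleGraph V} [DecidableRel G.Adj] (hG : G.IsAcyclic) (s : Finset V)
    (hs : (G.induce (s : Set V)).Connected) :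
    #{e ∈ G.edgeFinset | e.toFinset ⊆ s} + 1 = #s := by
  rw [G.card_filter_edgeFinset_toFinset_subset s, ← Fintype.card_coe s]
  convert (SimpleGraph.IsTree.mk hs (hG.induce _)).card_edgeFinset
  simp

lemma Finset.sum_sum_eq_sum_card_filter_nsmul {ι α M : Type*} [Fintype α] [DecidableEq α]
    [AddCommMonoid M] (s : Finset ι) (A : ι → Finset α) (f : α → M) :
    ∑ k ∈ s, ∑ i ∈ A k, f i = ∑ i, #{k ∈ s | i ∈ A k} • f i := by
  rw [sum_comm' (s' := fun i => {k ∈ s | i ∈ A k}) (t' := univ) (by simp)]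
  simp_rw [sum_const]

section JunctionTree

variable {V m : Type*} [DecidableEq V] (C : m → Finset V)

lemma mem_sep_iff {v : V} {e : Sym2 m} : v ∈ sep C e ↔ ∀ k ∈ e, v ∈ C k := by
  induction e using Sym2.ind with
  | _ => simp [sep]

variable [Fintype m] [DecidableEq m] {T : SimpleGraph m} [DecidableRel T.Adj]

lemma card_clusters_eq_card_separators_add_one (hT : T.IsAcyclic)
    (hRIP : ∀ v : V, (T.induce {k : m | v ∈ C k}).Connected) (v : V) :
    #{k | v ∈ C k} = #{e ∈ T.edgeFinset | v ∈ sep C e} + 1 := by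
  have hsep : ∀ e : Sym2 m, v ∈ sep C e ↔ e.toFinset ⊆ ({k | v ∈ C k} : Finset m) := fun e => by
    simp [mem_sep_iff, subset_iff]
  simp_rw [hsep]
  refine (hT.card_filter_edgeFinset_subset_add_one _ ?_).symm
  rw [coe_filter_univ]
  exact hRIP v

lemma sum_sum_clusters_eq_add_sum_sum_separators [Fintype V] (hT : T.IsAcyclic)
    (hRIP : ∀ v : V, (T.induce {k : m | v ∈ C k}).Connected) (f : V → ℝ) :
    ∑ k, ∑ i ∈ C k, f i = ∑ i, f i + ∑ e ∈ T.edgeFinset, ∑ i ∈ sep C e, f i := by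
  simp_rw [sum_sum_eq_sum_card_filter_nsmul, card_clusters_eq_card_separators_add_one C hT hRIP,
    succ_nsmul, sum_add_distrib, add_comm]

end JunctionTree

lemma mul_log_div_prod_div_prod {ι κ : Type*} (s : Finset ι) (t : Finset κ) {a : ℝ} (b : ι → ℝ)
    (c : κ → ℝ) (ha : 0 ≤ a) (hb : ∀ k ∈ s, a ≤ b k) (hc : ∀ e ∈ t, a ≤ c e) :
    a * log (a / ((∏ k ∈ s, b k) / ∏ e ∈ t, c e))
      = a * log a - ∑ k ∈ s, a * log (b k) + ∑ e ∈ t, a * log (c e) := by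
  obtain rfl | ha := ha.eq_or_lt
  · simp
  have hb' : ∀ k ∈ s, b k ≠ 0 := fun k hk => (ha.trans_le (hb k hk)).ne'
  have hc' : ∀ e ∈ t, c e ≠ 0 := fun e he => (ha.trans_le (hc e he)).ne'
  rw [log_div ha.ne' (div_ne_zero (prod_ne_zero_iff.2 hb') (prod_ne_zero_iff.2 hc')),
    log_div (prod_ne_zero_iff.2 hb') (prod_ne_zero_iff.2 hc'), log_prod hb', log_prod hc']
  simp only [mul_sub, mul_sum]
  ring

section Marginals

variable {V Λ : Type*} [Fintype V] [DecidableEq V] [Fintype Λ] [DecidableEq Λ]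
  (p : (V → Λ) → ℝ)

lemma le_margAt (hp : ∀ x, 0 ≤ p x) (A : Finset V) (x : V → Λ) : p x ≤ margAt p A x := by
  unfold margAt marg
  refine le_of_eq_of_le (by simp) (single_le_sum (fun y _ => ?_) (mem_univ x))
  split_ifs <;> simp [hp y]

lemma sum_marg_mul (A : Finset V) (g : (A → Λ) → ℝ) :
    ∑ y, marg p A y * g y = ∑ x, p x * g (fun i => x i.1) := by
  simp only [marg, sum_mul, ite_mul, zero_mul, ← funext_iff]
  rw [sum_comm]
  simp

lemma sum_mul_log_margAt (A : Finset V) :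
    ∑ x, p x * log (margAt p A x) = -entH (marg p A) := by
  simp only [entH, negMulLog, neg_mul, sum_neg_distrib, neg_neg, margAt]
  exact (sum_marg_mul p A fun y => log (marg p A y)).symm

lemma margAt_univ (x : V → Λ) : margAt p univ x = p x := by
  have hrestrict : ∀ y : V → Λ, (∀ i : (univ : Finset V), y i = x i) ↔ y = x := fun y => by
    simp [funext_iff]
  simp only [margAt, marg, hrestrict]
  simp

lemma KL_prod_margAt_div_prod_margAt (hp : ∀ x, 0 ≤ p x) {ι κ : Type*} (s : Finset ι)
    (t : Finset κ) (A : ι → Finset V) (B : κ → Finset V) :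
    KL p (fun x => (∏ k ∈ s, margAt p (A k) x) / ∏ e ∈ t, margAt p (B e) x)
      = -entH (marg p univ) + ∑ k ∈ s, entH (marg p (A k))
        - ∑ e ∈ t, entH (marg p (B e)) := by
  have hfull : ∑ x, p x * log (p x) = -entH (marg p univ) := by
    simpa only [margAt_univ] using sum_mul_log_margAt p univ
  have hlog x := mul_log_div_prod_div_prod s t _ _ (hp x) (fun k _ => le_margAt p hp (A k) x)
    (fun e _ => le_margAt p hp (B e) x)
  simp only [KL, hlog, sum_add_distrib, sum_sub_distrib]
  rw [sum_comm (s := univ) (t := s), sum_comm (s := univ) (t := t), hfull]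
  simp only [sum_mul_log_margAt, sum_neg_distrib]
  ring

end Marginals

theorem kl_junction_tree_weight_general
    {V Λ m : Type*} [Fintype V] [DecidableEq V] [Fintype Λ] [DecidableEq Λ]
    [Fintype m] [DecidableEq m]
    (p : (V → Λ) → ℝ) (hp : ∀ x, 0 ≤ p x)
    (C : m → Finset V) (T : SimpleGraph m) [DecidableRel T.Adj]
    (hT : T.IsTree)
    (hRIP : ∀ v : V, ((T.induce {k : m | v ∈ C k}).Connected)) :
    KL p (fun x : V → Λ =>
        (∏ k : m, margAt p (C k) x) / ∏ e ∈ T.edgeFinset, margAt p (sep C e) x)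
      = info p Finset.univ
        - ((∑ k : m, info p (C k)) - ∑ e ∈ T.edgeFinset, info p (sep C e)) := by
  have hsingletons := sum_sum_clusters_eq_add_sum_sum_separators C hT.isAcyclic hRIP
    fun i => entH (marg p {i})
  rw [KL_prod_margAt_div_prod_margAt p hp]
  simp only [info, sum_sub_distrib]
  linarith

/-- for a junction tree `(V, 𝒞, 𝒮)` (clusters `C k` arranged in a tree
`T` satisfying the running intersection property, covering `V`), the KL divergence of
the junction tree distribution `P_J(x) = ∏_C P(x_C) / ∏_S P(x_S)^{ν_S−1}` (the
separator product being taken over the edges of the tree, which counts each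
separator set `S` exactly `ν_S − 1` times) from `P` satisfies
`KL(P, P_J) = I(X) − [Σ_C I(X_C) − Σ_S (ν_S−1) I(X_S)]`; hence minimizing the KL
divergence is equivalent to maximizing the junction tree weight, the term `I(X)`
being independent of the junction tree structure. -/
theorem kl_junction_tree_weight
    {V Λ m : Type*} [Fintype V] [DecidableEq V] [Fintype Λ] [DecidableEq Λ]
    [Fintype m] [DecidableEq m]
    (p : (V → Λ) → ℝ) (hp : ∀ x, 0 ≤ p x) (hsum : ∑ x, p x = 1)
    (C : m → Finset V) (T : SimpleGraph m) [DecidableRel T.Adj]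
    (hT : T.IsTree)
    (hcover : ∀ v : V, ∃ k : m, v ∈ C k)
    (hRIP : ∀ v : V, ((T.induce {k : m | v ∈ C k}).Connected)) :
    KL p (fun x : V → Λ =>
        (∏ k : m, margAt p (C k) x) / ∏ e ∈ T.edgeFinset, margAt p (sep C e) x)
      = info p Finset.univ
        - ((∑ k : m, info p (C k)) - ∑ e ∈ T.edgeFinset, info p (sep C e)) :=
  kl_junction_tree_weight_general p hp C T hT hRIP
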